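/- (Matching decomposition preserving a marked neutral edge.) Let n = 2m, let A ⊔ B be a partition of {1,…,n} with |A| = |B| = m, let a ∈ A and b ∈ B, and let G be a directed graph on {1,…,n} of multidegree (d,…,d) containing the edge (a,b). Then X_G lies in the additive subgroup of ℤ[u_1,…,u_n,v_1,…,v_n] generated by the products X_{Γ_1}·X_{Γ_2}⋯X_{Γ_d} in which each Γ_j is a perfect matching on {1,…,n} all of whose edges join a vertex of A to a vertex of B, and at least one Γ_j contains the edge (a,b). -/

import Mathlib

open MvPolynomial

/-- A directed multigraph on the vertex set `Fin n`: a multiset of ordered pairs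
(multiple edges allowed). -/
abbrev DGraph (n : ℕ) := Multiset (Fin n × Fin n)

/-- `Γ` has no loops. -/
def DGraph.loopless {n : ℕ} (Γ : DGraph n) : Prop := ∀ e ∈ Γ, e.1 ≠ e.2

/-- The multidegree (valence) of `Γ` at the vertex `v`: the number of edges of `Γ`
incident to `v`, counted with multiplicity. -/
def DGraph.mdeg {n : ℕ} (Γ : DGraph n) (v : Fin n) : ℕ :=
  Multiset.countP (fun e => e.1 = v) Γ + Multiset.countP (fun e => e.2 = v) Γ

/-- A perfect matching on `{1,…,n}`: a directed graph of multidegree `(1,…,1)`.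
(Multidegree one everywhere forces looplessness.) -/
def DGraph.isPM {n : ℕ} (Γ : DGraph n) : Prop := ∀ v, Γ.mdeg v = 1

/-- The invariant `X_Γ = ∏_{(i,j) ∈ Γ} (u_j v_i - u_i v_j)`, where the variable
`Sum.inl i` plays the role of `u_i` and `Sum.inr i` plays the role of `v_i`. -/
noncomputable def XG {n : ℕ} (Γ : DGraph n) : MvPolynomial (Fin n ⊕ Fin n) ℤ :=
  (Γ.map (fun e => X (Sum.inl e.2) * X (Sum.inr e.1) - X (Sum.inl e.1) * X (Sum.inr e.2))).prod

/-! Via the Plücker relation, an edge inside `A` together with an edge inside `Aᶜ` can be traded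
for two crossing edges in two ways, and `X_G` is the difference of the invariants of the two
rewired graphs; both are still `d`-regular and still contain `(a, b)`. Since `|A| = |Aᶜ|`,
regularity forces as many edges inside `A` as inside `Aᶜ`, so induction on their number reduces
to a `d`-regular multigraph all of whose edges cross the partition. By Hall's theorem such a
graph is a sum of `d` perfect matchings, one of which carries the edge `(a, b)`. -/

open Finset

theorem Function.Injective.sum_ite_apply_eq {ι α : Type*} [Fintype ι] [DecidableEq α]
    {g : ι → α} (hg : Function.Injective g) (v : α) :
    ∑ i, (if g i = v then 1 else 0 : ℕ) = if v ∈ univ.image g then 1 else 0 :=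
  (sum_image (f := fun x => (if x = v then 1 else 0 : ℕ)) fun _ _ _ _ h => hg h).symm.trans
    (sum_ite_eq' _ _ _)

theorem Multiset.countP_le_countP_of_imp {α : Type*} {p q : α → Prop} [DecidablePred p]
    [DecidablePred q] {s : Multiset α} (h : ∀ x ∈ s, p x → q x) :
    s.countP p ≤ s.countP q :=
  Quot.induction_on s (fun l h => by simpa using List.countP_mono_left (by simpa using h)) h

namespace DGraph

variable {n : ℕ}

def IsRegularOfDegree (G : DGraph n) (d : ℕ) : Prop := ∀ v, G.mdeg v = d

def IsBipartiteWith (G : DGraph n) (A : Finset (Fin n)) : Prop :=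
  ∀ e ∈ G, (e.1 ∈ A ∧ e.2 ∉ A) ∨ (e.2 ∈ A ∧ e.1 ∉ A)

def numEdgesWithin (G : DGraph n) (T : Finset (Fin n)) : ℕ :=
  G.countP fun e => e.1 ∈ T ∧ e.2 ∈ T

def Adj (G : DGraph n) (v w : Fin n) : Prop := (v, w) ∈ G ∨ (w, v) ∈ G

instance (G : DGraph n) : DecidableRel G.Adj := fun _ _ => instDecidableOr

lemma mdeg_zero (v : Fin n) : mdeg (0 : DGraph n) v = 0 := rfl

lemma mdeg_cons (e : Fin n × Fin n) (G : DGraph n) (v : Fin n) :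
    mdeg (e ::ₘ G) v = G.mdeg v + ((if e.1 = v then 1 else 0) + (if e.2 = v then 1 else 0)) := by
  simp only [mdeg, Multiset.countP_cons]
  omega

lemma mdeg_add (G H : DGraph n) (v : Fin n) : mdeg (G + H) v = G.mdeg v + H.mdeg v := by
  simp only [mdeg, Multiset.countP_add]
  omega

lemma mdeg_sum {ι : Type*} (s : Finset ι) (Γ : ι → DGraph n) (v : Fin n) :
    mdeg (∑ i ∈ s, Γ i) v = ∑ i ∈ s, (Γ i).mdeg v :=
  map_sum (G := DGraph n →+ ℕ)
    { toFun := (mdeg · v), map_zero' := rfl, map_add' := (mdeg_add · · v) } Γ s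

lemma mdeg_singleton (e : Fin n × Fin n) (v : Fin n) :
    mdeg ({e} : DGraph n) v = (if e.1 = v then 1 else 0) + (if e.2 = v then 1 else 0) := by
  rw [← Multiset.cons_zero, mdeg_cons, mdeg_zero, zero_add]

lemma sum_mdeg_cons (e : Fin n × Fin n) (G : DGraph n) (T : Finset (Fin n)) :
    ∑ v ∈ T, mdeg (e ::ₘ G) v =
      ∑ v ∈ T, G.mdeg v + ((if e.1 ∈ T then 1 else 0) + (if e.2 ∈ T then 1 else 0)) := by
  simp only [mdeg_cons, sum_add_distrib, sum_ite_eq]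

lemma sum_mdeg (G : DGraph n) (T : Finset (Fin n)) :
    ∑ v ∈ T, G.mdeg v = G.countP (fun e => e.1 ∈ T) + G.countP (fun e => e.2 ∈ T) := by
  induction G using Multiset.induction with
  | empty => simp [mdeg_zero]
  | cons e G ih =>
    rw [sum_mdeg_cons, ih, Multiset.countP_cons, Multiset.countP_cons]
    omega

/-- Crossing edges contribute once to each side of `T ⊔ Tᶜ`, edges within a side twice to that
side. -/
lemma sum_mdeg_add_two_mul_numEdgesWithin_compl (G : DGraph n) (T : Finset (Fin n)) :
    ∑ v ∈ T, G.mdeg v + 2 * G.numEdgesWithin Tᶜ =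
      ∑ v ∈ Tᶜ, G.mdeg v + 2 * G.numEdgesWithin T := by
  induction G using Multiset.induction with
  | empty => simp [mdeg_zero, numEdgesWithin]
  | cons e G ih =>
    rw [sum_mdeg_cons, sum_mdeg_cons]
    simp only [numEdgesWithin, Multiset.countP_cons, mem_compl] at ih ⊢
    by_cases h1 : e.1 ∈ T <;> by_cases h2 : e.2 ∈ T <;> simp [h1, h2] <;> omega

lemma isBipartiteWith_iff_numEdgesWithin_eq_zero {G : DGraph n} {A : Finset (Fin n)} :
    G.IsBipartiteWith A ↔ G.numEdgesWithin A = 0 ∧ G.numEdgesWithin Aᶜ = 0 := by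
  simp only [IsBipartiteWith, numEdgesWithin, Multiset.countP_eq_zero, mem_compl]
  grind

lemma card_compl_eq_card_of_isBipartiteWith {G : DGraph n} {A : Finset (Fin n)} {d : ℕ}
    (hbip : G.IsBipartiteWith A) (hreg : G.IsRegularOfDegree d) (hd : 0 < d) : #Aᶜ = #A := by
  have h := sum_mdeg_add_two_mul_numEdgesWithin_compl G A
  simp only [isBipartiteWith_iff_numEdgesWithin_eq_zero.mp hbip, hreg _, sum_const,
    smul_eq_mul] at h
  exact (Nat.eq_of_mul_eq_mul_right hd (by omega)).symm

lemma numEdgesWithin_eq_numEdgesWithin_compl {G : DGraph n} {A : Finset (Fin n)} {d : ℕ}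
    (hreg : G.IsRegularOfDegree d) (hA : #Aᶜ = #A) :
    G.numEdgesWithin A = G.numEdgesWithin Aᶜ := by
  have h := sum_mdeg_add_two_mul_numEdgesWithin_compl G A
  simp only [hreg _, sum_const, smul_eq_mul, hA] at h
  omega

/-- Hall's condition: the `d * #S` edges at `S` have their other ends in the neighbourhood
of `S`, which carries only `d` edges per vertex. -/
lemma card_le_card_adj {G : DGraph n} {d : ℕ} (hreg : G.IsRegularOfDegree d) (hd : 0 < d)
    (S : Finset (Fin n)) : #S ≤ #{w | ∃ v ∈ S, G.Adj v w} := by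
  set N : Finset (Fin n) := {w | ∃ v ∈ S, G.Adj v w}
  have h₁ : G.countP (·.1 ∈ S) ≤ G.countP (·.2 ∈ N) :=
    Multiset.countP_le_countP_of_imp fun e he hS => by
      simpa [N] using ⟨e.1, hS, Or.inl he⟩
  have h₂ : G.countP (·.2 ∈ S) ≤ G.countP (·.1 ∈ N) :=
    Multiset.countP_le_countP_of_imp fun e he hS => by
      simpa [N] using ⟨e.2, hS, Or.inr he⟩
  have h := sum_mdeg G S
  have h' := sum_mdeg G N
  simp only [hreg _, sum_const, smul_eq_mul] at h h'
  exact Nat.le_of_mul_le_mul_right (by omega) hd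

lemma exists_isPM_le_of_injective {G : DGraph n} {A : Finset (Fin n)} (f : A → Fin n)
    (hf : Function.Injective f) (himage : univ.image f = Aᶜ) (hadj : ∀ p : A, G.Adj p (f p)) :
    ∃ M ≤ G, M.isPM := by
  have hfA (p : A) : f p ∉ A := mem_compl.mp (himage ▸ mem_image_of_mem f (mem_univ p))
  have hedge_ex (p : A) : ∃ e ∈ G, e = (↑p, f p) ∨ e = (f p, ↑p) :=
    (hadj p).elim (fun h => ⟨_, h, .inl rfl⟩) (fun h => ⟨_, h, .inr rfl⟩)
  choose edge hedgeG hedge using hedge_ex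
  have hedge_inj : Function.Injective edge := by
    intro p q hpq
    rcases hedge p with hp | hp <;> rcases hedge q with hq | hq <;> rw [hp, hq] at hpq <;>
      simp only [Prod.mk.injEq] at hpq
    · exact Subtype.ext hpq.1
    · exact absurd (hpq.1 ▸ p.2) (hfA q)
    · exact absurd (hpq.1 ▸ q.2) (hfA p)
    · exact Subtype.ext hpq.2
  refine ⟨univ.val.map edge, ?_, fun v => ?_⟩
  · rw [Multiset.le_iff_subset (univ.nodup.map hedge_inj)]
    intro e he
    obtain ⟨p, -, rfl⟩ := Multiset.mem_map.mp he
    exact hedgeG p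
  · have hsum : univ.val.map edge = ∑ p, ({edge p} : DGraph n) := by
      rw [← Multiset.sum_map_singleton (univ.val.map edge), Multiset.map_map]
      rfl
    have hdeg (p : A) :
        mdeg {edge p} v = (if (p : Fin n) = v then 1 else 0) + if f p = v then 1 else 0 := by
      rcases hedge p with h | h
      · rw [mdeg_singleton, h]
      · rw [mdeg_singleton, h, add_comm]
    rw [hsum, mdeg_sum, sum_congr rfl fun p _ => hdeg p, sum_add_distrib,
      Subtype.val_injective.sum_ite_apply_eq, hf.sum_ite_apply_eq, himage, univ_eq_attach,
      attach_image_val]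
    by_cases hv : v ∈ A <;> simp [hv]

theorem exists_isPM_le {G : DGraph n} {A : Finset (Fin n)} {d : ℕ} (hbip : G.IsBipartiteWith A)
    (hreg : G.IsRegularOfDegree d) (hd : 0 < d) : ∃ M ≤ G, M.isPM := by
  obtain ⟨f, hf, hadj⟩ := (Fintype.all_card_le_filter_rel_iff_exists_injective
    fun (p : A) q => G.Adj p q).mp fun S => by
      simpa using card_le_card_adj hreg hd (S.map (Function.Embedding.subtype _))
  have hfA (p : A) : f p ∉ A := by
    rcases hadj p with h | h <;> have := hbip _ h <;> simp_all
  refine exists_isPM_le_of_injective f hf (eq_of_subset_of_card_le ?_ ?_) hadj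
  · intro q hq
    obtain ⟨p, -, rfl⟩ := mem_image.mp hq
    exact mem_compl.mpr (hfA p)
  · rw [card_image_of_injective _ hf, card_univ, Fintype.card_coe,
      card_compl_eq_card_of_isBipartiteWith hbip hreg hd]

lemma eq_zero_of_isRegularOfDegree_zero {G : DGraph n} (hreg : G.IsRegularOfDegree 0) : G = 0 :=
  Multiset.eq_zero_of_forall_notMem fun e he => by
    have h₁ := hreg e.1
    have h₂ : 0 < G.countP (·.1 = e.1) := Multiset.countP_pos.mpr ⟨e, he, rfl⟩
    rw [mdeg] at h₁
    omega

lemma isRegularOfDegree_tsub {G M : DGraph n} {d : ℕ} (hreg : G.IsRegularOfDegree (d + 1))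
    (hM : M ≤ G) (hpm : M.isPM) : (G - M).IsRegularOfDegree d := fun v => by
  have := mdeg_add (G - M) M v
  rw [tsub_add_cancel_of_le hM, hreg v, hpm v] at this
  omega

theorem exists_eq_sum_isPM {A : Finset (Fin n)} :
    ∀ {d : ℕ} {G : DGraph n}, G.IsBipartiteWith A → G.IsRegularOfDegree d →
      ∃ Γs : Fin d → DGraph n, (∀ j, (Γs j).isPM ∧ Γs j ≤ G) ∧ G = ∑ j, Γs j
  | 0, G, _, hreg =>
    ⟨Fin.elim0, fun j => j.elim0, by simp [eq_zero_of_isRegularOfDegree_zero hreg]⟩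
  | d + 1, G, hbip, hreg => by
    obtain ⟨M, hM, hpm⟩ := exists_isPM_le hbip hreg d.succ_pos
    obtain ⟨Γs, hΓs, hsum⟩ := exists_eq_sum_isPM
      (fun e he => hbip e (Multiset.mem_of_le tsub_le_self he))
      (isRegularOfDegree_tsub hreg hM hpm)
    refine ⟨Fin.cons M Γs,
      Fin.cases ⟨hpm, hM⟩ fun j => ⟨(hΓs j).1, (hΓs j).2.trans tsub_le_self⟩, ?_⟩
    rw [Fin.sum_cons, ← hsum, add_tsub_cancel_of_le hM]

end DGraph

open DGraph

variable {n : ℕ}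

lemma XG_cons (e : Fin n × Fin n) (G : DGraph n) :
    XG (e ::ₘ G) =
      (X (Sum.inl e.2) * X (Sum.inr e.1) - X (Sum.inl e.1) * X (Sum.inr e.2)) * XG G := by
  simp [XG]

lemma XG_add (G H : DGraph n) : XG (G + H) = XG G * XG H := by
  simp [XG]

lemma XG_sum {ι : Type*} (s : Finset ι) (Γ : ι → DGraph n) :
    XG (∑ i ∈ s, Γ i) = ∏ i ∈ s, XG (Γ i) := by
  induction s using Finset.cons_induction with
  | empty => simp [XG]
  | cons i s hi ih => rw [sum_cons, prod_cons, XG_add, ih]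

/-- The Plücker relation `[x y][z w] = [w y][z x] - [z y][w x]` among the brackets
`[i j] = u_j v_i - u_i v_j`. -/
lemma XG_cons_cons (x y z w : Fin n) (H : DGraph n) :
    XG ((x, y) ::ₘ (z, w) ::ₘ H) =
      XG ((w, y) ::ₘ (z, x) ::ₘ H) - XG ((z, y) ::ₘ (w, x) ::ₘ H) := by
  simp only [XG_cons]
  ring

def matchingProducts (A : Finset (Fin n)) (a b : Fin n) (d : ℕ) :
    Set (MvPolynomial (Fin n ⊕ Fin n) ℤ) :=
  {p | ∃ Γs : Fin d → DGraph n, (∀ j, (Γs j).isPM ∧ (Γs j).IsBipartiteWith A) ∧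
    (∃ j, (a, b) ∈ Γs j) ∧ p = ∏ j, XG (Γs j)}

theorem XG_mem_closure_matchingProducts_of_isBipartiteWith {A : Finset (Fin n)} {a b : Fin n}
    {d : ℕ} {G : DGraph n} (hbip : G.IsBipartiteWith A) (hreg : G.IsRegularOfDegree d)
    (hab : (a, b) ∈ G) : XG G ∈ AddSubgroup.closure (matchingProducts A a b d) := by
  obtain ⟨Γs, hΓs, rfl⟩ := exists_eq_sum_isPM hbip hreg
  obtain ⟨j, -, hj⟩ := Multiset.mem_sum.mp hab
  exact AddSubgroup.subset_closure ⟨Γs, fun j => ⟨(hΓs j).1, fun e he => hbip e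
    (Multiset.mem_of_le ((hΓs j).2) he)⟩, ⟨j, hj⟩, XG_sum _ _⟩

theorem XG_mem_closure_matchingProducts {A : Finset (Fin n)} (hA : #Aᶜ = #A) {a b : Fin n}
    (ha : a ∈ A) (hb : b ∉ A) {d : ℕ} {G : DGraph n} (hreg : G.IsRegularOfDegree d)
    (hab : (a, b) ∈ G) : XG G ∈ AddSubgroup.closure (matchingProducts A a b d) := by
  have hcompl := numEdgesWithin_eq_numEdgesWithin_compl hreg hA
  induction hk : G.numEdgesWithin A generalizing G with
  | zero =>
    exact XG_mem_closure_matchingProducts_of_isBipartiteWith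
      (isBipartiteWith_iff_numEdgesWithin_eq_zero.mpr ⟨hk, hcompl ▸ hk⟩) hreg hab
  | succ k ih =>
    have hA₀ : 0 < G.numEdgesWithin A := by omega
    have hAc₀ : 0 < G.numEdgesWithin Aᶜ := by omega
    obtain ⟨⟨x, y⟩, hxy, hx, hy⟩ := Multiset.countP_pos.mp hA₀
    obtain ⟨⟨z, w⟩, hzw, hz, hw⟩ := Multiset.countP_pos.mp hAc₀
    rw [mem_compl] at hz hw
    obtain ⟨H, rfl⟩ : ∃ H : DGraph n, G = (x, y) ::ₘ (z, w) ::ₘ H := by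
      have : (z, w) ∈ G.erase (x, y) := (Multiset.mem_erase_of_ne (by grind)).mpr hzw
      exact ⟨_, by rw [Multiset.cons_erase this, Multiset.cons_erase hxy]⟩
    have habH : (a, b) ∈ H := by grind
    have hkH : H.numEdgesWithin A = k := by
      simpa [numEdgesWithin, Multiset.countP_cons, hx, hy, hz] using hk
    have hrewire (u u' : Fin n) (hu : u ∉ A) (hu' : u' ∉ A)
        (hreg' : IsRegularOfDegree ((u, y) ::ₘ (u', x) ::ₘ H) d) :
        XG ((u, y) ::ₘ (u', x) ::ₘ H) ∈ AddSubgroup.closure (matchingProducts A a b d) :=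
      ih hreg' (by simp [habH]) (numEdgesWithin_eq_numEdgesWithin_compl hreg' hA)
        (by simpa [numEdgesWithin, Multiset.countP_cons, hu, hu'] using hkH)
    rw [XG_cons_cons]
    refine sub_mem (hrewire w z hw hz fun v => ?_) (hrewire z w hz hw fun v => ?_) <;>
      rw [← hreg v] <;> simp only [mdeg_cons] <;> split_ifs <;> omega

theorem matching_decomposition_marked_edge_general (m d : ℕ)
    (A : Finset (Fin (2 * m))) (hA : A.card = m)
    (a b : Fin (2 * m)) (ha : a ∈ A) (hb : b ∉ A)
    (G : DGraph (2 * m)) (hGdeg : ∀ v, G.mdeg v = d)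
    (hab : (a, b) ∈ G) :
    XG G ∈ AddSubgroup.closure
      {p | ∃ Γs : Fin d → DGraph (2 * m),
        (∀ j, (Γs j).isPM ∧
          ∀ e ∈ Γs j, (e.1 ∈ A ∧ e.2 ∉ A) ∨ (e.2 ∈ A ∧ e.1 ∉ A)) ∧
        (∃ j, (a, b) ∈ Γs j) ∧ p = ∏ j, XG (Γs j)} :=
  XG_mem_closure_matchingProducts (by rw [card_compl, Fintype.card_fin, hA]; omega)
    ha hb hGdeg hab

/-- **Matching decomposition preserving a marked neutral edge.** Let `n = 2m`, let
`A ⊔ Aᶜ` be a partition of the vertices with `|A| = m`, let `a ∈ A`, `b ∉ A`, and let `G`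
have multidegree `(d,…,d)` and contain the edge `(a,b)`.  Then `X_G` lies in the additive
subgroup generated by products `X_{Γ_1}⋯X_{Γ_d}` in which each `Γ_j` is a perfect
matching all of whose edges join `A` to `Aᶜ`, and at least one `Γ_j` contains the edge
`(a,b)`. -/
theorem matching_decomposition_marked_edge (m d : ℕ)
    (A : Finset (Fin (2 * m))) (hA : A.card = m)
    (a b : Fin (2 * m)) (ha : a ∈ A) (hb : b ∉ A)
    (G : DGraph (2 * m)) (hGl : G.loopless) (hGdeg : ∀ v, G.mdeg v = d)
    (hab : (a, b) ∈ G) :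
    XG G ∈ AddSubgroup.closure
      {p | ∃ Γs : Fin d → DGraph (2 * m),
        (∀ j, (Γs j).isPM ∧
          ∀ e ∈ Γs j, (e.1 ∈ A ∧ e.2 ∉ A) ∨ (e.2 ∈ A ∧ e.1 ∉ A)) ∧
        (∃ j, (a, b) ∈ Γs j) ∧ p = ∏ j, XG (Γs j)} :=
  matching_decomposition_marked_edge_general m d A hA a b ha hb G hGdeg hab
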